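/- arXiv:2303.00228 — 3 statements merged into one kernel-verified Lean document; each statement's English description precedes it below -/
import Mathlib

section
/- (Laplace mechanism is ε-differentially private.) Let ε > 0, Δ > 0, n ≥ 1, and set λ = Δ/ε. Let μ be the product measure on ℝⁿ of n independent Laplace(λ) measures. Then for all a, b ∈ ℝⁿ with ‖a − b‖₁ ≤ Δ and every measurable set S ⊆ ℝⁿ, (μ.map(x ↦ x + a))(S) ≤ exp(ε) · (μ.map(x ↦ x + b))(S). In other words, the translated noise laws corresponding to query outputs with ℓ1 distance at most Δ satisfy the ε-DP inequality. -/
open MeasureTheory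

/-- The Laplace measure with scale `λ` on `ℝ`: the probability measure with density
`x ↦ (1/(2λ))·exp(−|x|/λ)` with respect to Lebesgue measure. -/
noncomputable def laplaceMeasure (lam : ℝ) : Measure ℝ :=
  volume.withDensity fun x => ENNReal.ofReal ((1 / (2 * lam)) * Real.exp (-|x| / lam))

open scoped ENNReal

/-!
Translating the product Laplace law by `v` gives the law with density `y ↦ ∏ᵢ p (yᵢ - vᵢ)`,
where `p` is the Laplace density. By the triangle inequality
`p (t - aᵢ) ≤ exp (|aᵢ - bᵢ| / λ) p (t - bᵢ)`, so the density of the law translated by `a` is at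
most `exp (‖a - b‖₁ / λ) ≤ exp ε` times that of the law translated by `b`, and this inequality of
densities integrates to an inequality of measures.
-/

namespace MeasureTheory

section PiWithDensity

variable {E : Type*} [MeasurableSpace E]

theorem lintegral_fin_nat_prod_eq_prod {n : ℕ}
    {μ : Fin n → Measure E} [∀ i, SigmaFinite (μ i)] {f : Fin n → E → ℝ≥0∞}
    (hf : ∀ i, Measurable (f i)) :
    ∫⁻ x, ∏ i, f i (x i) ∂Measure.pi μ = ∏ i, ∫⁻ x, f i x ∂μ i := by
  induction n with
  | zero => simp
  | succ n ih =>
    calc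
      _ = ∫⁻ x : E × (Fin n → E), f 0 x.1 * ∏ i : Fin n, f i.succ (x.2 i)
          ∂(μ 0).prod (Measure.pi fun i => μ i.succ) := by
        rw [← (measurePreserving_piFinSuccAbove μ 0).symm.lintegral_comp_emb
          (MeasurableEquiv.measurableEmbedding _)]
        simp [MeasurableEquiv.piFinSuccAbove_symm_apply, Fin.prod_univ_succ]
      _ = (∫⁻ x, f 0 x ∂μ 0) * ∏ i : Fin n, ∫⁻ x, f i.succ x ∂μ i.succ := by
        have htail : Measurable fun z : Fin n → E => ∏ i, f i.succ (z i) :=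
          Finset.measurable_prod _ fun i _ => (hf i.succ).comp (measurable_pi_apply i)
        rw [lintegral_prod_mul (hf 0).aemeasurable htail.aemeasurable, ih fun i => hf i.succ]
      _ = ∏ i, ∫⁻ x, f i x ∂μ i := (Fin.prod_univ_succ fun i => ∫⁻ x, f i x ∂μ i).symm

theorem lintegral_fintype_prod_eq_prod {ι : Type*} [Fintype ι]
    {μ : ι → Measure E} [∀ i, SigmaFinite (μ i)] {f : ι → E → ℝ≥0∞}
    (hf : ∀ i, Measurable (f i)) :
    ∫⁻ x, ∏ i, f i (x i) ∂Measure.pi μ = ∏ i, ∫⁻ x, f i x ∂μ i := by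
  let e := (Fintype.equivFin ι).symm
  rw [← (measurePreserving_piCongrLeft μ e).lintegral_comp_emb
    (MeasurableEquiv.measurableEmbedding _)]
  simp_rw [← e.prod_comp, MeasurableEquiv.coe_piCongrLeft, Equiv.piCongrLeft_apply_apply]
  exact lintegral_fin_nat_prod_eq_prod fun i => hf (e i)

theorem Measure.pi_withDensity {ι : Type*} [Fintype ι]
    {μ : ι → Measure E} [∀ i, SigmaFinite (μ i)] {f : ι → E → ℝ≥0∞}
    (hf : ∀ i, Measurable (f i)) [∀ i, SigmaFinite ((μ i).withDensity (f i))] :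
    Measure.pi (fun i => (μ i).withDensity (f i)) =
      (Measure.pi μ).withDensity fun x => ∏ i, f i (x i) := by
  refine Measure.pi_eq fun s hs => ?_
  have hbox : (Set.univ.pi s).indicator (fun x => ∏ i, f i (x i)) =
      fun x => ∏ i, (s i).indicator (f i) (x i) := by
    ext x
    classical
    simp only [Set.indicator, Set.mem_univ_pi, Fintype.prod_ite_zero]
  rw [withDensity_apply _ (.univ_pi hs), ← lintegral_indicator (.univ_pi hs), hbox,
    lintegral_fintype_prod_eq_prod fun i => (hf i).indicator (hs i)]
  simp_rw [lintegral_indicator (hs _), withDensity_apply _ (hs _)]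

end PiWithDensity

theorem Measure.map_add_right_withDensity {G : Type*} [MeasurableSpace G] [AddGroup G]
    [MeasurableAdd G] (μ : Measure G) [μ.IsAddRightInvariant] {f : G → ℝ≥0∞}
    (hf : Measurable f) (v : G) :
    (μ.withDensity f).map (· + v) = μ.withDensity fun y => f (y - v) := by
  ext s hs
  rw [Measure.map_apply (measurable_add_const v) hs,
    withDensity_apply _ (measurable_add_const v hs), withDensity_apply _ hs,
    ← (measurePreserving_sub_right μ v).setLIntegral_comp_preimage (measurable_add_const v hs) hf]
  congr 2
  ext y
  simp

theorem withDensity_le_smul_withDensity {α : Type*} [MeasurableSpace α] {μ : Measure α}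
    {f g : α → ℝ≥0∞} {c : ℝ≥0∞} (hg : Measurable g) (hfg : ∀ x, f x ≤ c * g x) :
    μ.withDensity f ≤ c • μ.withDensity g := by
  rw [← withDensity_smul c hg]
  exact withDensity_mono (.of_forall hfg)

end MeasureTheory

noncomputable def laplaceDensity (lam x : ℝ) : ℝ≥0∞ :=
  ENNReal.ofReal (1 / (2 * lam) * Real.exp (-|x| / lam))

theorem laplaceMeasure_eq_withDensity (lam : ℝ) :
    laplaceMeasure lam = volume.withDensity (laplaceDensity lam) := rfl

@[fun_prop]
theorem measurable_laplaceDensity (lam : ℝ) : Measurable (laplaceDensity lam) := by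
  unfold laplaceDensity
  fun_prop

instance (lam : ℝ) : SigmaFinite (volume.withDensity (laplaceDensity lam)) :=
  SigmaFinite.withDensity_ofReal _

theorem laplaceDensity_sub_le {lam : ℝ} (hlam : 0 ≤ lam) (x a b : ℝ) :
    laplaceDensity lam (x - a) ≤
      ENNReal.ofReal (Real.exp (|a - b| / lam)) * laplaceDensity lam (x - b) := by
  have htri : |x - b| ≤ |x - a| + |a - b| := abs_sub_le x a b
  rw [laplaceDensity, laplaceDensity, ← ENNReal.ofReal_mul (Real.exp_nonneg _), mul_left_comm,
    ← Real.exp_add]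
  gcongr
  rw [← add_div]
  exact div_le_div_of_nonneg_right (by linarith) hlam

theorem pi_laplaceMeasure {ι : Type*} [Fintype ι] (lam : ℝ) :
    Measure.pi (fun _ : ι => laplaceMeasure lam) =
      volume.withDensity fun x => ∏ i, laplaceDensity lam (x i) := by
  simp only [laplaceMeasure_eq_withDensity]
  rw [Measure.pi_withDensity fun _ => measurable_laplaceDensity lam, volume_pi]

theorem map_add_pi_laplaceMeasure_le {ι : Type*} [Fintype ι] {lam : ℝ} (hlam : 0 ≤ lam)
    (a b : ι → ℝ) :
    (Measure.pi fun _ : ι => laplaceMeasure lam).map (· + a) ≤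
      ENNReal.ofReal (Real.exp (∑ i, |a i - b i| / lam)) •
        (Measure.pi fun _ : ι => laplaceMeasure lam).map (· + b) := by
  have hF : Measurable fun x : ι → ℝ => ∏ i, laplaceDensity lam (x i) := by fun_prop
  rw [pi_laplaceMeasure, Measure.map_add_right_withDensity _ hF,
    Measure.map_add_right_withDensity _ hF]
  refine withDensity_le_smul_withDensity (by fun_prop) fun x => ?_
  calc ∏ i, laplaceDensity lam (x i - a i)
      ≤ ∏ i, ENNReal.ofReal (Real.exp (|a i - b i| / lam)) * laplaceDensity lam (x i - b i) :=
        Finset.prod_le_prod' fun i _ => laplaceDensity_sub_le hlam _ _ _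
    _ = ENNReal.ofReal (Real.exp (∑ i, |a i - b i| / lam)) *
          ∏ i, laplaceDensity lam (x i - b i) := by
        rw [Finset.prod_mul_distrib, Real.exp_sum,
          ENNReal.ofReal_prod_of_nonneg fun i _ => Real.exp_nonneg _]

theorem laplace_mechanism_eps_DP_general
    {n : ℕ} (ε Δ : ℝ) (hε : 0 < ε)
    (lam : ℝ) (hlam : lam = Δ / ε)
    (μ : Measure (Fin n → ℝ))
    (hμ : μ = Measure.pi fun _ : Fin n => laplaceMeasure lam)
    (a b : Fin n → ℝ) (hab : ∑ i, |a i - b i| ≤ Δ)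
    (S : Set (Fin n → ℝ)) :
    (μ.map fun x => x + a) S ≤ ENNReal.ofReal (Real.exp ε) * (μ.map fun x => x + b) S := by
  have hΔ : 0 ≤ Δ := (Finset.sum_nonneg fun i _ => abs_nonneg _).trans hab
  have hlam0 : 0 ≤ lam := hlam ▸ div_nonneg hΔ hε.le
  have hexp : ∑ i, |a i - b i| / lam ≤ ε := by
    rw [← Finset.sum_div]
    refine div_le_of_le_mul₀ hlam0 hε.le ?_
    rwa [hlam, mul_div_cancel₀ _ hε.ne']
  subst hμ
  refine (Measure.le_iff'.1 (map_add_pi_laplaceMeasure_le hlam0 a b) S).trans ?_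
  rw [Measure.smul_apply, smul_eq_mul]
  gcongr

/-- The Laplace mechanism with scale `λ = Δ/ε` is `ε`-differentially private: for outputs
`a, b` with `‖a − b‖₁ ≤ Δ`, the translated product-Laplace noise laws satisfy the
`ε`-DP inequality. -/
theorem laplace_mechanism_eps_DP
    {n : ℕ} (hn : 1 ≤ n) (ε Δ : ℝ) (hε : 0 < ε) (hΔ : 0 < Δ)
    (lam : ℝ) (hlam : lam = Δ / ε)
    (μ : Measure (Fin n → ℝ))
    (hμ : μ = Measure.pi fun _ : Fin n => laplaceMeasure lam)
    (a b : Fin n → ℝ) (hab : ∑ i, |a i - b i| ≤ Δ)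
    (S : Set (Fin n → ℝ)) (hS : MeasurableSet S) :
    (μ.map fun x => x + a) S ≤ ENNReal.ofReal (Real.exp ε) * (μ.map fun x => x + b) S :=
  laplace_mechanism_eps_DP_general ε Δ hε lam hlam μ hμ a b hab S
end

section
/- (Normalizing constant of the conditional Laplace mechanism for n = 3.) For every λ > 0, the double integral over ℝ² of exp(−(|u₁| + |u₂| + |u₁ + u₂|)/λ) with respect to Lebesgue measure equals (3/2)·λ², i.e., ∫∫_{ℝ²} exp(−(|u₁| + |u₂| + |u₁+u₂|)/λ) du₁ du₂ = (3/2)·λ². -/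
/-!
Scaling `u ↦ λ⁻¹ • u` reduces the claim to `λ = 1`. For fixed `u₁ = a`, the identity
`|y| + |a + y| = max |a| |2y + a|` turns the inner integral into
`½ ∫ exp (-max |a| |t|) dt = (1 + |a|) e^{-|a|}`, and the outer integral is then
`2 ∫₀^∞ (1 + t) e^{-2t} dt = 3/2`.
-/

open MeasureTheory Set Real

theorem abs_add_abs_eq_max_abs_add_abs_sub {α : Type*} [AddCommGroup α] [LinearOrder α]
    [IsOrderedAddMonoid α] (a b : α) : |a| + |b| = max |a + b| |a - b| := by
  grind

lemma integrable_exp_neg_abs : Integrable fun x : ℝ => exp (-|x|) :=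
  Integrable.of_integral_ne_zero <| by
    rw [integral_comp_abs (f := fun x => exp (-x)), integral_exp_neg_Ioi_zero]
    norm_num

lemma integrableOn_rpow_mul_exp_neg_mul_Ioi {a r : ℝ} (ha : 0 < a) (hr : 0 < r) :
    IntegrableOn (fun t : ℝ => t ^ (a - 1) * exp (-(r * t))) (Ioi 0) :=
  Integrable.of_integral_ne_zero <| by
    rw [integral_rpow_mul_exp_neg_mul_Ioi ha hr]
    exact mul_ne_zero (by positivity) (Gamma_pos_of_pos ha).ne'

lemma setIntegral_Ioi_exp_neg_max {c : ℝ} (hc : 0 ≤ c) :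
    ∫ t in Ioi 0, exp (-max c t) = (1 + c) * exp (-c) := by
  have h_const : EqOn (fun t => exp (-max c t)) (fun _ => exp (-c)) (Ioc 0 c) :=
    fun t ht => by simp [max_eq_left ht.2]
  have h_tail : EqOn (fun t => exp (-max c t)) (fun t => exp (-t)) (Ioi c) :=
    fun t ht => by simp [max_eq_right (mem_Ioi.1 ht).le]
  rw [← Ioc_union_Ioi_eq_Ioi hc, setIntegral_union Ioc_disjoint_Ioi_same measurableSet_Ioi
      ((integrableOn_const measure_Ioc_lt_top.ne).congr_fun h_const.symm measurableSet_Ioc)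
      ((integrableOn_exp_neg_Ioi c).congr_fun h_tail.symm measurableSet_Ioi),
    setIntegral_congr_fun measurableSet_Ioc h_const,
    setIntegral_congr_fun measurableSet_Ioi h_tail,
    setIntegral_const, integral_exp_neg_Ioi, Real.volume_real_Ioc_of_le hc, smul_eq_mul]
  ring

lemma integral_exp_neg_max_abs {c : ℝ} (hc : 0 ≤ c) :
    ∫ t, exp (-max c |t|) = 2 * ((1 + c) * exp (-c)) := by
  rw [integral_comp_abs (f := fun t => exp (-max c t)), setIntegral_Ioi_exp_neg_max hc]

lemma integral_exp_neg_abs_add_abs_add (a : ℝ) :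
    ∫ y, exp (-(|y| + |a + y|)) = (1 + |a|) * exp (-|a|) := by
  have h_max (y : ℝ) : |y| + |a + y| = max |a| |2 * y + a| := by
    rw [← abs_neg y, add_comm, abs_add_abs_eq_max_abs_add_abs_sub]
    ring_nf
  simp_rw [h_max]
  rw [Measure.integral_comp_mul_left (fun z => exp (-max |a| |z + a|)) 2,
    integral_add_right_eq_self (fun t => exp (-max |a| |t|)) a,
    integral_exp_neg_max_abs (abs_nonneg a), abs_of_pos (by norm_num : (0 : ℝ) < 2⁻¹),
    smul_eq_mul, inv_mul_cancel_left₀ two_ne_zero]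

lemma setIntegral_Ioi_one_add_mul_exp_neg_two_mul :
    ∫ t in Ioi 0, (1 + t) * exp (-(2 * t)) = 3 / 4 := by
  have h_split : EqOn (fun t : ℝ => (1 + t) * exp (-(2 * t)))
      (fun t => t ^ ((1 : ℝ) - 1) * exp (-(2 * t)) + t ^ ((2 : ℝ) - 1) * exp (-(2 * t)))
      (Ioi 0) := fun t _ => by norm_num; ring
  rw [setIntegral_congr_fun measurableSet_Ioi h_split,
    integral_add (integrableOn_rpow_mul_exp_neg_mul_Ioi one_pos two_pos)
      (integrableOn_rpow_mul_exp_neg_mul_Ioi two_pos two_pos),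
    integral_rpow_mul_exp_neg_mul_Ioi one_pos two_pos,
    integral_rpow_mul_exp_neg_mul_Ioi two_pos two_pos, Gamma_one, Gamma_two]
  norm_num

lemma integral_exp_neg_abs_add_abs_add_abs_add :
    ∫ u : ℝ × ℝ, exp (-(|u.1| + |u.2| + |u.1 + u.2|)) = 3 / 2 := by
  have h_meas : AEStronglyMeasurable (fun u : ℝ × ℝ => exp (-(|u.1| + |u.2| + |u.1 + u.2|))) :=
    (by fun_prop : Continuous _).aestronglyMeasurable
  have h_int : Integrable (fun u : ℝ × ℝ => exp (-(|u.1| + |u.2| + |u.1 + u.2|))) := by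
    refine (integrable_exp_neg_abs.mul_prod integrable_exp_neg_abs).mono' h_meas
      (.of_forall fun u => ?_)
    rw [norm_of_nonneg (exp_pos _).le, ← exp_add, exp_le_exp]
    linarith [abs_nonneg (u.1 + u.2)]
  have h_inner (x : ℝ) : ∫ y, exp (-(|x| + |y| + |x + y|)) = (1 + |x|) * exp (-(2 * |x|)) := by
    have h_factor (y : ℝ) :
        exp (-(|x| + |y| + |x + y|)) = exp (-|x|) * exp (-(|y| + |x + y|)) := by
      rw [← exp_add]; ring_nf
    simp_rw [h_factor]
    rw [integral_const_mul, integral_exp_neg_abs_add_abs_add, mul_left_comm, ← exp_add]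
    ring_nf
  rw [Measure.volume_eq_prod, integral_prod _ h_int]
  simp_rw [h_inner]
  rw [integral_comp_abs (f := fun t => (1 + t) * exp (-(2 * t))),
    setIntegral_Ioi_one_add_mul_exp_neg_two_mul]
  norm_num

/-- Normalizing constant of the conditional Laplace mechanism for `n = 3`:
`∫∫_{ℝ²} exp(−(|u₁| + |u₂| + |u₁+u₂|)/λ) du₁ du₂ = (3/2)·λ²`. -/
theorem conditional_laplace_normalizer
    (lam : ℝ) (hlam : 0 < lam) :
    ∫ u : ℝ × ℝ, Real.exp (-(|u.1| + |u.2| + |u.1 + u.2|) / lam)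
      = 3 / 2 * lam ^ 2 := by
  let F : ℝ × ℝ → ℝ := fun v => exp (-(|v.1| + |v.2| + |v.1 + v.2|))
  have h_scale (u : ℝ × ℝ) :
      exp (-(|u.1| + |u.2| + |u.1 + u.2|) / lam) = F (lam⁻¹ • u) := by
    simp only [F, Prod.smul_fst, Prod.smul_snd, smul_eq_mul, ← mul_add, abs_mul,
      abs_of_pos (inv_pos.2 hlam)]
    ring_nf
  simp_rw [h_scale]
  rw [Measure.integral_comp_inv_smul_of_nonneg volume F hlam.le,
    integral_exp_neg_abs_add_abs_add_abs_add, Module.finrank_prod, Module.finrank_self,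
    smul_eq_mul]
  ring
end

section
/- (Marginal density and variance of the conditional Laplace mechanism for n = 3.) Let λ > 0. Then: (1) for every u₁ ∈ ℝ, ∫_ℝ exp(−(|u₁| + |u₂| + |u₁ + u₂|)/λ) du₂ = (λ + |u₁|)·exp(−2|u₁|/λ); (2) the function h(u) = (2/(3λ²))·(λ + |u|)·exp(−2|u|/λ) is a probability density on ℝ (∫_ℝ h(u) du = 1), and its second moment satisfies ∫_ℝ u²·h(u) du = (5/6)·λ². Consequently the marginal variance of the conditioned Laplace mechanism at n = 3 is (5/6)λ², which is smaller than the corresponding marginal variance 2λ²(1 − 1/3) = (4/3)λ² of the imaged (L2-projected) mechanism. -/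
/-!
Shifting `u = v - a / 2` turns the exponent `|a| + |u| + |a + u|` into `|a| + 2 max |v| (|a| / 2)`,
an even function of `v` that is constant for `|v| ≤ |a| / 2` and linear beyond, which gives (1).
The density `h` is even as well, so its mass and second moment reduce to the Gamma integrals
`∫₀^∞ xⁿ e^{-bx} dx = n! / b^{n+1}` with `b = 2 / λ`.
-/

open MeasureTheory Set Real
open scoped Nat

theorem abs_sub_add_abs_add {α : Type*} [CommRing α] [LinearOrder α] [IsStrictOrderedRing α]
    (x y : α) : |x - y| + |x + y| = 2 * max |x| |y| := by
  rcases abs_cases (x - y) with h₁ | h₁ <;> rcases abs_cases (x + y) with h₂ | h₂ <;>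
    rcases abs_cases x with h₃ | h₃ <;> rcases abs_cases y with h₄ | h₄ <;>
    rcases max_cases |x| |y| with h₅ | h₅ <;> linarith

section ExpMoments

variable {b : ℝ}

theorem integral_pow_mul_exp_neg_mul_Ioi (hb : 0 < b) (n : ℕ) :
    ∫ x in Ioi (0 : ℝ), x ^ n * exp (-(b * x)) = n ! / b ^ (n + 1) := by
  have h := integral_rpow_mul_exp_neg_mul_Ioi (a := n + 1) (by positivity) hb
  rw [add_sub_cancel_right, Gamma_nat_eq_factorial, one_div, inv_rpow hb.le,
    ← Nat.cast_add_one, rpow_natCast] at h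
  rw [div_eq_inv_mul, ← h]
  refine setIntegral_congr_fun measurableSet_Ioi fun x _ => ?_
  rw [rpow_natCast]

theorem integrableOn_pow_mul_exp_neg_mul_Ioi (hb : 0 < b) (n : ℕ) :
    IntegrableOn (fun x : ℝ => x ^ n * exp (-(b * x))) (Ioi 0) :=
  Integrable.of_integral_ne_zero <| by
    rw [integral_pow_mul_exp_neg_mul_Ioi hb n]
    positivity

theorem integral_monomial_add_monomial_mul_exp_neg_mul_abs (hb : 0 < b) (α β : ℝ) (m n : ℕ) :
    ∫ x : ℝ, (α * |x| ^ m + β * |x| ^ n) * exp (-(b * |x|))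
      = 2 * (α * m ! / b ^ (m + 1) + β * n ! / b ^ (n + 1)) := by
  rw [integral_comp_abs (f := fun t => (α * t ^ m + β * t ^ n) * exp (-(b * t)))]
  simp only [add_mul, mul_assoc]
  rw [integral_add ((integrableOn_pow_mul_exp_neg_mul_Ioi hb m).const_mul α)
      ((integrableOn_pow_mul_exp_neg_mul_Ioi hb n).const_mul β),
    integral_const_mul, integral_const_mul, integral_pow_mul_exp_neg_mul_Ioi hb,
    integral_pow_mul_exp_neg_mul_Ioi hb, mul_div_assoc, mul_div_assoc]

theorem integral_exp_neg_mul_max_Ioi (hb : 0 < b) {c : ℝ} (hc : 0 ≤ c) :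
    ∫ x in Ioi (0 : ℝ), exp (-(b * max x c)) = (c + 1 / b) * exp (-(b * c)) := by
  have hIoc : ∫ x in Ioc 0 c, exp (-(b * max x c)) = c * exp (-(b * c)) := by
    rw [setIntegral_congr_fun measurableSet_Ioc fun x hx => by rw [max_eq_right hx.2],
      setIntegral_const, Real.volume_real_Ioc_of_le hc, sub_zero, smul_eq_mul]
  have hIoi : ∫ x in Ioi c, exp (-(b * max x c)) = 1 / b * exp (-(b * c)) := by
    rw [setIntegral_congr_fun measurableSet_Ioi fun x hx => by
        rw [max_eq_left hx.le, ← neg_mul],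
      integral_exp_mul_Ioi (neg_lt_zero.mpr hb)]
    field_simp
  have hint : IntegrableOn (fun x => exp (-(b * max x c))) (Ioi c) :=
    (exp_neg_integrableOn_Ioi c hb).congr_fun
      (fun x hx => by dsimp only; rw [max_eq_left hx.le, neg_mul]) measurableSet_Ioi
  rw [← Ioc_union_Ioi_eq_Ioi hc, setIntegral_union Ioc_disjoint_Ioi_same measurableSet_Ioi
    ((integrableOn_const (C := exp (-(b * c))) measure_Ioc_lt_top.ne).congr_fun
      (fun x hx => by rw [max_eq_right hx.2]) measurableSet_Ioc) hint, hIoc, hIoi, add_mul]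

end ExpMoments

theorem integral_exp_neg_abs_add_abs_add_abs {lam : ℝ} (hlam : 0 < lam) (a : ℝ) :
    ∫ u : ℝ, exp (-(|a| + |u| + |a + u|) / lam) = (lam + |a|) * exp (-(2 * |a|) / lam) := by
  have hcentred : ∀ v : ℝ, exp (-(|a| + |v - a / 2| + |a + (v - a / 2)|) / lam)
      = exp (-(|a| / lam)) * exp (-(2 / lam * max |v| (|a| / 2))) := by
    intro v
    rw [add_assoc, show a + (v - a / 2) = v + a / 2 by ring, abs_sub_add_abs_add, abs_div,
      abs_two, ← exp_add]
    congr 1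
    field_simp
    ring
  rw [← integral_sub_right_eq_self _ (a / 2)]
  simp only [hcentred]
  rw [integral_const_mul, integral_comp_abs (f := fun t => exp (-(2 / lam * max t (|a| / 2)))),
    integral_exp_neg_mul_max_Ioi (by positivity) (by positivity),
    show -(2 * |a|) / lam = -(|a| / lam) + -(2 / lam * (|a| / 2)) by ring, exp_add]
  field_simp
  ring

/-- Marginal density and variance of the conditional Laplace mechanism for `n = 3`:
(1) `∫_ℝ exp(−(|u₁|+|u₂|+|u₁+u₂|)/λ) du₂ = (λ + |u₁|)·exp(−2|u₁|/λ)`;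
(2) `h(u) = (2/(3λ²))·(λ + |u|)·exp(−2|u|/λ)` is a probability density with second
moment `(5/6)·λ²`; consequently the marginal variance `(5/6)λ²` of the conditioned
mechanism is smaller than the marginal variance `2λ²(1 − 1/3) = (4/3)λ²` of the imaged
(`L2`-projected) mechanism. -/
theorem conditional_laplace_marginal
    (lam : ℝ) (hlam : 0 < lam)
    (h : ℝ → ℝ)
    (hh : ∀ u, h u = 2 / (3 * lam ^ 2) * ((lam + |u|) * Real.exp (-(2 * |u|) / lam))) :
    (∀ u₁ : ℝ, ∫ u₂ : ℝ, Real.exp (-(|u₁| + |u₂| + |u₁ + u₂|) / lam)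
        = (lam + |u₁|) * Real.exp (-(2 * |u₁|) / lam)) ∧
      (∫ u : ℝ, h u) = 1 ∧
      (∫ u : ℝ, u ^ 2 * h u) = 5 / 6 * lam ^ 2 ∧
      5 / 6 * lam ^ 2 < 2 * lam ^ 2 * (1 - 1 / 3) := by
  have hb : 0 < 2 / lam := by positivity
  have hlam₀ : lam ≠ 0 := hlam.ne'
  have hexp : ∀ u : ℝ, exp (-(2 * |u|) / lam) = exp (-(2 / lam * |u|)) := fun u => by
    congr 1; ring
  refine ⟨fun u₁ => integral_exp_neg_abs_add_abs_add_abs hlam u₁, ?_, ?_,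
    by nlinarith [pow_pos hlam 2]⟩
  · have hdensity : h = fun u =>
        (2 / (3 * lam) * |u| ^ 0 + 2 / (3 * lam ^ 2) * |u| ^ 1) * exp (-(2 / lam * |u|)) := by
      funext u
      rw [hh, hexp]
      field_simp
    rw [hdensity, integral_monomial_add_monomial_mul_exp_neg_mul_abs hb]
    simp only [div_pow, Nat.factorial]
    field_simp
    ring
  · have hmoment : (fun u : ℝ => u ^ 2 * h u) = fun u =>
        (2 / (3 * lam) * |u| ^ 2 + 2 / (3 * lam ^ 2) * |u| ^ 3) * exp (-(2 / lam * |u|)) := by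
      funext u
      rw [hh, hexp, ← sq_abs u]
      field_simp
    rw [hmoment, integral_monomial_add_monomial_mul_exp_neg_mul_abs hb]
    simp only [div_pow, Nat.factorial]
    field_simp
    ring
end
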